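/- arXiv:2507.20946 — 9 statements merged into one kernel-verified Lean document; each statement's English description precedes it below -/
import Mathlib

section
/- Let A = diag(a₁, a₂, 1) ∈ GL₃(ℂ) with a₁, a₂, 1 pairwise distinct, and let ξ be a primitive third root of unity (ξ = e^{2πi/3} or e^{4πi/3}). If the pair {a₁, a₂} is not equal to {e^{2πi/3}, e^{4πi/3}}, then there is no invertible matrix X ∈ GL₃(ℂ) satisfying X·A = ξ·A·X. -/
open Matrix Complex

/-- For `A = diag(a₁,a₂,1)` with pairwise distinct diagonal and a primitive
cube root of unity `ξ`, if `{a₁,a₂} ≠ {e^{2πi/3}, e^{4πi/3}}` then no invertible `X`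
satisfies `X·A = ξ·A·X`. -/
theorem stmt2 (a₁ a₂ : ℂ) (ha₁ : a₁ ≠ 0) (ha₂ : a₂ ≠ 0)
    (h12 : a₁ ≠ a₂) (h1 : a₁ ≠ 1) (h2 : a₂ ≠ 1)
    (ξ : ℂ) (hξ : ξ ^ 3 = 1) (hξ1 : ξ ≠ 1)
    (hpair : ({a₁, a₂} : Set ℂ) ≠
      {Complex.exp (2 * Real.pi * Complex.I / 3), Complex.exp (4 * Real.pi * Complex.I / 3)})
    (A : Matrix (Fin 3) (Fin 3) ℂ) (hA : A = Matrix.diagonal ![a₁, a₂, 1]) :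
    ¬ ∃ X : Matrix (Fin 3) (Fin 3) ℂ, IsUnit X.det ∧ X * A = ξ • (A * X) := by
  rintro ⟨X, hdet, hX⟩
  set d : Fin 3 → ℂ := ![a₁, a₂, 1] with hd
  have hdne : ∀ i, d i ≠ 0 := by
    intro i
    fin_cases i <;> simp [hd, ha₁, ha₂]
  have hξ0 : ξ ≠ 0 := by
    intro h; rw [h] at hξ; norm_num at hξ
  have key : ∀ i j, X i j * d j = ξ * (d i * X i j) := by
    intro i j
    have h := congrFun (congrFun hX i) j
    simpa [hA, Matrix.mul_diagonal, Matrix.diagonal_mul, Matrix.smul_apply] using h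
  have hdet0 : X.det ≠ 0 := hdet.ne_zero
  rw [Matrix.det_apply] at hdet0
  obtain ⟨σ, -, hσ⟩ := Finset.exists_ne_zero_of_sum_ne_zero hdet0
  have hprod : (∏ i, X (σ i) i) ≠ 0 := by
    intro h; rw [h] at hσ; simp at hσ
  have hXne : ∀ i, X (σ i) i ≠ 0 := fun i =>
    Finset.prod_ne_zero_iff.mp hprod i (Finset.mem_univ i)
  have hstep : ∀ i, d i = ξ * d (σ i) := by
    intro i
    have h := key (σ i) i
    have h2 : X (σ i) i * d i = X (σ i) i * (ξ * d (σ i)) := by linear_combination h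
    exact mul_left_cancel₀ (hXne i) h2
  set j := σ 2 with hjdef
  set k := σ j with hkdef
  have e1 : (1 : ℂ) = ξ * d j := by
    have := hstep 2
    simpa [hd] using this
  have e2 : d j = ξ * d k := hstep j
  -- j ≠ 2
  have hj2 : j ≠ 2 := by
    intro h
    rw [h] at e1
    have : d 2 = (1 : ℂ) := by simp [hd]
    rw [this, mul_one] at e1
    exact hξ1 e1.symm
  -- k ≠ j
  have hkj : k ≠ j := by
    intro h
    rw [h] at e2
    have h0 : (ξ - 1) * d j = 0 := by linear_combination -e2
    rcases mul_eq_zero.mp h0 with h' | h'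
    · exact hξ1 (by linear_combination h')
    · exact hdne j h'
  -- k ≠ 2
  have hk2 : k ≠ 2 := by
    intro h
    rw [h] at e2
    have hd2 : d 2 = (1 : ℂ) := by simp [hd]
    rw [hd2, mul_one] at e2
    rw [e2] at e1
    exact hξ1 (by linear_combination hξ - ξ * e1.symm)
  have hdj : d j = ξ ^ 2 := by
    refine mul_left_cancel₀ hξ0 ?_
    linear_combination -e1 - hξ
  have hdk : d k = ξ := by
    refine mul_left_cancel₀ hξ0 ?_
    linear_combination -e2 + hdj
  -- ω facts
  set ω : ℂ := Complex.exp (2 * Real.pi * Complex.I / 3) with hωdef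
  have hω3 : ω ^ 3 = 1 := by
    rw [hωdef, ← Complex.exp_nat_mul]
    have : ((3 : ℕ) : ℂ) * (2 * Real.pi * Complex.I / 3) = 2 * Real.pi * Complex.I := by
      push_cast; ring
    rw [this, Complex.exp_two_pi_mul_I]
  have h2piI : (2 * (Real.pi : ℂ) * Complex.I) ≠ 0 := by
    refine mul_ne_zero (mul_ne_zero two_ne_zero ?_) Complex.I_ne_zero
    exact_mod_cast Real.pi_ne_zero
  have hω1 : ω ≠ 1 := by
    intro h
    rw [hωdef, Complex.exp_eq_one_iff] at h
    obtain ⟨n, hn⟩ := h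
    have h4 : ((n : ℂ) * 3 - 1) * (2 * (Real.pi : ℂ) * Complex.I) = 0 := by
      linear_combination -3 * hn
    have h5 : (n : ℂ) * 3 - 1 = 0 := by
      rcases mul_eq_zero.mp h4 with h' | h'
      · exact h'
      · exact absurd h' h2piI
    have h6 : ((n * 3 - 1 : ℤ) : ℂ) = 0 := by push_cast; linear_combination h5
    have h7 : (n * 3 - 1 : ℤ) = 0 := by exact_mod_cast h6
    omega
  have hωexp : Complex.exp (4 * Real.pi * Complex.I / 3) = ω ^ 2 := by
    rw [hωdef, ← Complex.exp_nat_mul]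
    congr 1
    push_cast; ring
  have hqξ : ξ ^ 2 + ξ + 1 = 0 := by
    have h0 : (ξ - 1) * (ξ ^ 2 + ξ + 1) = 0 := by linear_combination hξ
    rcases mul_eq_zero.mp h0 with h' | h'
    · exact absurd (by linear_combination h') hξ1
    · exact h'
  have hqω : ω ^ 2 + ω + 1 = 0 := by
    have h0 : (ω - 1) * (ω ^ 2 + ω + 1) = 0 := by linear_combination hω3
    rcases mul_eq_zero.mp h0 with h' | h'
    · exact absurd (by linear_combination h') hω1
    · exact h'
  have hξω : ξ = ω ∨ ξ = ω ^ 2 := by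
    have h0 : (ξ - ω) * (ξ + ω + 1) = 0 := by linear_combination hqξ - hqω
    rcases mul_eq_zero.mp h0 with h' | h'
    · left; linear_combination h'
    · right; linear_combination h' - hqω
  have hω4 : (ω ^ 2) ^ 2 = ω := by linear_combination ω * hω3
  -- identify j, k
  have hall : ∀ m : Fin 3, m = 0 ∨ m = 1 ∨ m = 2 := by decide
  have hda0 : d 0 = a₁ := by simp [hd]
  have hda1 : d 1 = a₂ := by simp [hd]
  have hset : ({a₁, a₂} : Set ℂ) = {ξ, ξ ^ 2} := by
    rcases hall j with hj | hj | hj <;> rcases hall k with hk | hk | hk <;>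
      first
      | (exact absurd hj hj2)
      | (exact absurd hk hk2)
      | (exact absurd (hk.trans hj.symm) hkj)
      | (rw [hj] at hdj; rw [hk] at hdk;
         simp only [hd, Matrix.cons_val_zero, Matrix.cons_val_one, Matrix.head_cons]
           at hdj hdk;
         rw [hdj, hdk] <;> exact Set.pair_comm _ _)
  apply hpair
  rw [hset, hωexp]
  rcases hξω with h | h
  · rw [h]
  · rw [h, hω4]
    exact Set.pair_comm _ _
end

section
/- Let A = diag(a₁, a₂, 1) ∈ GL₃(ℂ) where a₁, a₂, 1 are pairwise distinct and at least one of a₁³ ≠ 1 or a₂³ ≠ 1 holds. Then the centralizer in PGL₃(ℂ) of the image [A] consists exactly of the images of diagonal invertible matrices, and this centralizer is connected. -/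
open Matrix

lemma center_GL_iff (X : GL (Fin 3) ℂ) :
    X ∈ Subgroup.center (GL (Fin 3) ℂ) ↔
      ∃ c : ℂ, (X : Matrix (Fin 3) (Fin 3) ℂ) = c • (1 : Matrix (Fin 3) (Fin 3) ℂ) := by
  constructor
  · intro hX
    have h : ∀ t : TransvectionStruct (Fin 3) ℂ, Commute t.toMatrix (X : Matrix (Fin 3) (Fin 3) ℂ) := by
      intro t
      have := (Subgroup.mem_center_iff.mp hX ⟨t.toMatrix, t.inv.toMatrix, t.mul_inv, t.inv_mul⟩)
      have := congrArg (Units.val) this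
      simpa [Commute, SemiconjBy] using this
    obtain ⟨c, hc⟩ := Matrix.mem_range_scalar_of_commute_transvectionStruct h
    exact ⟨c, by rw [← hc]; simp [Matrix.scalar, Matrix.smul_eq_diagonal_mul]⟩
  · rintro ⟨c, hc⟩
    rw [Subgroup.mem_center_iff]
    intro Y
    ext
    simp only [Units.val_mul, hc]
    rw [Matrix.mul_smul, Matrix.smul_mul, Matrix.mul_one, Matrix.one_mul]


lemma key_c_eq_one (a₁ a₂ : ℂ) (h12 : a₁ ≠ a₂) (h1 : a₁ ≠ 1) (h2 : a₂ ≠ 1)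
    (ha₁ : a₁ ≠ 0) (ha₂ : a₂ ≠ 0)
    (hcube : a₁ ^ 3 ≠ 1 ∨ a₂ ^ 3 ≠ 1)
    (X : Matrix (Fin 3) (Fin 3) ℂ) (hX : X.det ≠ 0) (c : ℂ) (hc3 : c ^ 3 = 1)
    (h : ∀ i j, X i j * (![a₁, a₂, 1] j) = c * (![a₁, a₂, 1] i) * X i j) : c = 1 := by
  set d : Fin 3 → ℂ := ![a₁, a₂, 1] with hd
  by_contra hc
  have hcol : ∀ j : Fin 3, ∃ i, d j = c * d i := by
    intro j
    have : ¬ ∀ i, X i j = 0 := fun hz => hX (Matrix.det_eq_zero_of_column_eq_zero j hz)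
    push_neg at this
    obtain ⟨i, hi⟩ := this
    refine ⟨i, mul_left_cancel₀ hi ?_⟩
    linear_combination h i j
  have hc2 : (1:ℂ) = c * a₁ ∨ (1:ℂ) = c * a₂ ∨ (1:ℂ) = c := by
    obtain ⟨i, hi⟩ := hcol 2; fin_cases i <;> simp [hd] at hi <;> tauto
  have hc1 : a₂ = c * a₁ ∨ a₂ = c * a₂ ∨ a₂ = c := by
    obtain ⟨i, hi⟩ := hcol 1; fin_cases i <;> simp [hd] at hi <;> tauto
  have hc0 : a₁ = c * a₁ ∨ a₁ = c * a₂ ∨ a₁ = c := by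
    obtain ⟨i, hi⟩ := hcol 0; fin_cases i <;> simp [hd] at hi <;> tauto
  have fix : ∀ x : ℂ, x ≠ 0 → x = c * x → False := by
    intro x hx hcx
    have : x * (1 - c) = 0 := by linear_combination hcx
    rcases mul_eq_zero.mp this with h' | h'
    · exact hx h'
    · exact hc (sub_eq_zero.mp h').symm
  rcases hc2 with h' | h' | h'
  · -- 1 = c * a₁, so a₁³ = 1
    have ha3 : a₁ ^ 3 = 1 := by
      linear_combination (-a₁^3) * hc3 - (c^2*a₁^2 + c*a₁ + 1) * h'
    rcases hc1 with h'' | h'' | h''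
    · exact h2 (h''.trans h'.symm)
    · exact fix a₂ ha₂ h''
    · have hb3 : a₂ ^ 3 = 1 := by rw [h'']; exact hc3
      rcases hcube with hq | hq
      · exact hq ha3
      · exact hq hb3
  · -- 1 = c * a₂, so a₂³ = 1
    have hb3 : a₂ ^ 3 = 1 := by
      linear_combination (-a₂^3) * hc3 - (c^2*a₂^2 + c*a₂ + 1) * h'
    rcases hc0 with h'' | h'' | h''
    · exact fix a₁ ha₁ h''
    · exact h1 (h''.trans h'.symm)
    · have ha3 : a₁ ^ 3 = 1 := by rw [h'']; exact hc3
      rcases hcube with hq | hq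
      · exact hq ha3
      · exact hq hb3
  · exact fix 1 one_ne_zero (by rw [mul_one]; exact h')

lemma connected_units_complex : ConnectedSpace ℂˣ := by
  have hC : IsConnected ({(0:ℂ)}ᶜ : Set ℂ) := by
    apply isConnected_compl_singleton_of_one_lt_rank
    rw [Complex.rank_real_complex]; norm_num
  haveI := Subtype.connectedSpace hC
  have hgc : Continuous (fun x : ({(0:ℂ)}ᶜ : Set ℂ) => Units.mk0 x.1 x.2) := by
    apply Units.continuous_iff.mpr
    constructor
    · exact continuous_subtype_val
    · exact (continuousOn_inv₀.mono (fun x hx => hx)).restrict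
  refine Function.Surjective.connectedSpace ?_ hgc
  intro u
  exact ⟨⟨(u : ℂ), u.ne_zero⟩, Units.ext rfl⟩

noncomputable def diagGL (u : Fin 3 → ℂˣ) : GL (Fin 3) ℂ :=
  ⟨Matrix.diagonal (fun i => (u i : ℂ)), Matrix.diagonal (fun i => (((u i)⁻¹ : ℂˣ) : ℂ)),
    by rw [Matrix.diagonal_mul_diagonal]; simp,
    by rw [Matrix.diagonal_mul_diagonal]; simp⟩

lemma det_GL_ne_zero (X : GL (Fin 3) ℂ) : (X : Matrix (Fin 3) (Fin 3) ℂ).det ≠ 0 := by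
  have h : (X : Matrix (Fin 3) (Fin 3) ℂ).det * ((X⁻¹ : GL (Fin 3) ℂ) : Matrix (Fin 3) (Fin 3) ℂ).det = 1 := by
    rw [← Matrix.det_mul, ← Units.val_mul, mul_inv_cancel, Units.val_one, Matrix.det_one]
  exact left_ne_zero_of_mul_eq_one h

lemma diag_of_mem (X : GL (Fin 3) ℂ)
    (hX : ∀ i j, i ≠ j → (X : Matrix (Fin 3) (Fin 3) ℂ) i j = 0) :
    (X : Matrix (Fin 3) (Fin 3) ℂ) = Matrix.diagonal (fun i => (X : Matrix (Fin 3) (Fin 3) ℂ) i i) := by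
  ext i j
  by_cases h : i = j
  · subst h; simp
  · rw [Matrix.diagonal_apply_ne _ h]; exact hX i j h

lemma connected_diag_set :
    IsConnected {X : GL (Fin 3) ℂ | ∀ i j, i ≠ j → (X : Matrix (Fin 3) (Fin 3) ℂ) i j = 0} := by
  haveI := connected_units_complex
  have hrange : {X : GL (Fin 3) ℂ | ∀ i j, i ≠ j → (X : Matrix (Fin 3) (Fin 3) ℂ) i j = 0}
      = Set.range diagGL := by
    ext X
    constructor
    · intro hX
      have hd := diag_of_mem X hX
      have hdet := det_GL_ne_zero X
      rw [hd, Matrix.det_diagonal] at hdet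
      refine ⟨fun i => Units.mk0 ((X : Matrix (Fin 3) (Fin 3) ℂ) i i)
        (fun h0 => hdet (Finset.prod_eq_zero (Finset.mem_univ i) h0)), ?_⟩
      · exact Units.ext (by rw [diagGL]; exact hd.symm)
    · rintro ⟨u, rfl⟩ i j hij
      show Matrix.diagonal (fun i => (u i : ℂ)) i j = 0
      exact Matrix.diagonal_apply_ne _ hij
  rw [hrange]
  apply isConnected_range
  apply Units.continuous_iff.mpr
  constructor
  · exact Continuous.matrix_diagonal (continuous_pi fun i =>
      Units.continuous_val.comp (continuous_apply i))
  · show Continuous fun u : Fin 3 → ℂˣ => Matrix.diagonal (fun i => (((u i)⁻¹ : ℂˣ) : ℂ))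
    exact Continuous.matrix_diagonal (continuous_pi fun i =>
      Units.continuous_coe_inv.comp (continuous_apply i))

/-- For `A = diag(a₁,a₂,1)` with pairwise distinct diagonal entries and
`a₁³ ≠ 1` or `a₂³ ≠ 1`, the centralizer in `PGL₃(ℂ)` of `[A]` is exactly the image of
the invertible diagonal matrices, and is connected. -/
theorem stmt5 (a₁ a₂ : ℂ) (h12 : a₁ ≠ a₂) (h1 : a₁ ≠ 1) (h2 : a₂ ≠ 1)
    (hcube : a₁ ^ 3 ≠ 1 ∨ a₂ ^ 3 ≠ 1)
    (A : GL (Fin 3) ℂ) (hA : (A : Matrix (Fin 3) (Fin 3) ℂ) = Matrix.diagonal ![a₁, a₂, 1]) :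
    (Subgroup.centralizer {QuotientGroup.mk' (Subgroup.center (GL (Fin 3) ℂ)) A} :
        Set ((GL (Fin 3) ℂ) ⧸ Subgroup.center (GL (Fin 3) ℂ))) =
      (QuotientGroup.mk' (Subgroup.center (GL (Fin 3) ℂ))) ''
        {X : GL (Fin 3) ℂ | ∀ i j, i ≠ j → (X : Matrix (Fin 3) (Fin 3) ℂ) i j = 0} ∧
    IsConnected (Subgroup.centralizer {QuotientGroup.mk' (Subgroup.center (GL (Fin 3) ℂ)) A} :
        Set ((GL (Fin 3) ℂ) ⧸ Subgroup.center (GL (Fin 3) ℂ))) := by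
  set Z := Subgroup.center (GL (Fin 3) ℂ) with hZ
  set π := QuotientGroup.mk' Z with hπ
  -- a₁, a₂ nonzero
  have hdetA := det_GL_ne_zero A
  rw [hA, Matrix.det_diagonal, Fin.prod_univ_three] at hdetA
  simp only [Matrix.cons_val_zero, Matrix.cons_val_one, Matrix.head_cons, mul_one,
    Matrix.cons_val_two, Matrix.tail_cons, mul_ne_zero_iff] at hdetA
  have ha₁ : a₁ ≠ 0 := hdetA.1
  have ha₂ : a₂ ≠ 0 := hdetA.2
  have hdist : ∀ i j : Fin 3, i ≠ j → (![a₁, a₂, 1] : Fin 3 → ℂ) i ≠ ![a₁, a₂, 1] j := by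
    intro i j hij
    fin_cases i <;> fin_cases j <;> simp_all <;>
      first
        | exact h12 | exact h1 | exact h2
        | exact fun hh => h12 hh.symm
        | exact fun hh => h1 hh.symm
        | exact fun hh => h2 hh.symm
  have hset : (Subgroup.centralizer {π A} : Set ((GL (Fin 3) ℂ) ⧸ Z)) =
      π '' {X : GL (Fin 3) ℂ | ∀ i j, i ≠ j → (X : Matrix (Fin 3) (Fin 3) ℂ) i j = 0} := by
    ext y
    constructor
    · intro hy
      obtain ⟨X, rfl⟩ := QuotientGroup.mk'_surjective Z y
      have hcom : π A * π X = π X * π A :=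
        Subgroup.mem_centralizer_iff.mp hy (π A) (Set.mem_singleton _)
      rw [← _root_.map_mul, ← _root_.map_mul, QuotientGroup.mk'_eq_mk'] at hcom
      obtain ⟨n, hnZ, hn⟩ := hcom
      obtain ⟨c, hcmat⟩ := (center_GL_iff n).mp hnZ
      have hmat : (X : Matrix (Fin 3) (Fin 3) ℂ) * (A : Matrix (Fin 3) (Fin 3) ℂ)
          = c • ((A : Matrix (Fin 3) (Fin 3) ℂ) * (X : Matrix (Fin 3) (Fin 3) ℂ)) := by
        have := congrArg (Units.val) hn
        simp only [Units.val_mul, hcmat] at this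
        rw [← this, mul_assoc]
        rw [Matrix.mul_smul, Matrix.mul_one]
        exact mul_smul_comm c _ _
      have hdX := det_GL_ne_zero X
      have hdA := det_GL_ne_zero A
      have hc3 : c ^ 3 = 1 := by
        have hdet := congrArg Matrix.det hmat
        rw [Matrix.det_mul, Matrix.det_smul, Matrix.det_mul] at hdet
        simp only [Fintype.card_fin] at hdet
        have h0 : (c ^ 3 - 1) * ((A : Matrix (Fin 3) (Fin 3) ℂ).det *
            (X : Matrix (Fin 3) (Fin 3) ℂ).det) = 0 := by linear_combination -hdet
        rcases mul_eq_zero.mp h0 with h' | h'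
        · exact sub_eq_zero.mp h'
        · rcases mul_eq_zero.mp h' with h'' | h''
          · exact absurd h'' hdA
          · exact absurd h'' hdX
      rw [hA] at hmat
      have hentry : ∀ i j, (X : Matrix (Fin 3) (Fin 3) ℂ) i j * (![a₁, a₂, 1] j)
          = c * (![a₁, a₂, 1] i) * (X : Matrix (Fin 3) (Fin 3) ℂ) i j := by
        intro i j
        have := congrFun (congrFun hmat i) j
        simpa [Matrix.mul_diagonal, Matrix.diagonal_mul, mul_assoc] using this
      have hc1 : c = 1 := key_c_eq_one a₁ a₂ h12 h1 h2 ha₁ ha₂ hcube _ hdX c hc3 hentry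
      refine ⟨X, ?_, rfl⟩
      intro i j hij
      have h' := hentry i j
      rw [hc1, one_mul] at h'
      have h'' : (X : Matrix (Fin 3) (Fin 3) ℂ) i j * ((![a₁, a₂, 1] : Fin 3 → ℂ) j - ![a₁, a₂, 1] i) = 0 := by
        linear_combination h'
      rcases mul_eq_zero.mp h'' with h3 | h3
      · exact h3
      · exact absurd (sub_eq_zero.mp h3) (hdist j i (Ne.symm hij))
    · rintro ⟨X, hX, rfl⟩
      rw [SetLike.mem_coe, Subgroup.mem_centralizer_iff]
      intro g hg
      rw [Set.mem_singleton_iff] at hg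
      subst hg
      rw [← _root_.map_mul, ← _root_.map_mul]
      congr 1
      apply Units.ext
      show (A : Matrix (Fin 3) (Fin 3) ℂ) * (X : Matrix (Fin 3) (Fin 3) ℂ)
        = (X : Matrix (Fin 3) (Fin 3) ℂ) * (A : Matrix (Fin 3) (Fin 3) ℂ)
      rw [hA, diag_of_mem X hX, Matrix.diagonal_mul_diagonal, Matrix.diagonal_mul_diagonal]
      exact congrArg _ (funext fun i => mul_comm _ _)
  refine ⟨hset, ?_⟩
  rw [hset]
  exact connected_diag_set.image _ (QuotientGroup.continuous_mk).continuousOn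
end

section
/- The centralizer in PGL₃(ℂ) of the image of the Sym² representation of SL₂(ℂ) (composed with the projection GL₃(ℂ) → PGL₃(ℂ)) is trivial; in particular its component group is trivial. -/
/-!
If `[X]` centralizes the image, then for every `A` in the image `X A = ξ A X` with `ξ³ = 1`
(compare determinants). Taking `A = Sym²(diag(2, 1/2)) = diag(4, 1, 1/4)`, whose entries have
distinct absolute values while `|ξ| = 1`, forces `X` to be diagonal. Taking the unipotent
`A = Sym²([[1, 1], [0, 1]])`, the diagonal entry `(0, 0)` gives `ξ = 1` and the
superdiagonal entries equate the diagonal entries of `X`, so `X` is scalar.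
-/

open Matrix

/-- The matrix of `Sym²` of `[[a,b],[c,d]] ∈ SL₂(ℂ)`. -/
def sym2Mat (a b c d : ℂ) : Matrix (Fin 3) (Fin 3) ℂ :=
  !![a ^ 2, a * b, b ^ 2; 2 * a * c, a * d + b * c, 2 * b * d; c ^ 2, c * d, d ^ 2]

namespace Matrix

variable {n : Type*} [Fintype n] [DecidableEq n]

theorem GeneralLinearGroup.exists_pow_card_eq_one_of_mk_mul_comm {R : Type*} [CommRing R]
    {X A : GL n R}
    (h : QuotientGroup.mk' (Subgroup.center (GL n R)) A * QuotientGroup.mk' _ X =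
      QuotientGroup.mk' _ X * QuotientGroup.mk' _ A) :
    ∃ r : R, r ^ Fintype.card n = 1 ∧ (X : Matrix n n R) * A = r • ((A : Matrix n n R) * X) := by
  rw [← map_mul, ← map_mul, QuotientGroup.mk'_eq_mk', center_eq_range_scalar] at h
  obtain ⟨_, ⟨u, rfl⟩, hu⟩ := h
  have hXA : (X : Matrix n n R) * A = (u : R) • ((A : Matrix n n R) * X) := by
    rw [← Units.val_mul, ← hu]
    simp [smul_eq_mul_diagonal]
  refine ⟨u, ?_, hXA⟩
  have hdet := congrArg Matrix.det hXA
  rw [det_smul, det_mul, det_mul, mul_comm (Matrix.det (X : Matrix n n R))] at hdet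
  have hunit : IsUnit (Matrix.det (A : Matrix n n R) * Matrix.det (X : Matrix n n R)) :=
    (isUnits_det_units A).mul (isUnits_det_units X)
  exact hunit.mul_eq_right.1 hdet.symm

section NormedField

variable {𝕜 : Type*} [NormedField 𝕜] {X : Matrix n n 𝕜} {d : n → 𝕜} {r : 𝕜}

theorem apply_eq_zero_of_mul_diagonal_eq_smul (hr : ‖r‖ = 1)
    (h : X * diagonal d = r • (diagonal d * X)) {i j : n} (hij : ‖d i‖ ≠ ‖d j‖) :
    X i j = 0 := by
  by_contra hX
  have hij' := congrFun₂ h i j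
  simp only [mul_diagonal, diagonal_mul, smul_apply, smul_eq_mul] at hij'
  have hd : d j = r * d i := mul_left_cancel₀ hX (by linear_combination hij')
  exact hij (by simp [hd, hr])

theorem isDiag_of_mul_diagonal_eq_smul (hr : ‖r‖ = 1)
    (hd : Function.Injective fun i ↦ ‖d i‖) (h : X * diagonal d = r • (diagonal d * X)) :
    X.IsDiag :=
  fun _ _ hij ↦ apply_eq_zero_of_mul_diagonal_eq_smul hr h (hd.ne hij)

end NormedField

section Domain

variable {R : Type*} [CommRing R] [IsDomain R]

theorem apply_eq_smul_apply_of_diagonal_mul_eq_smul {M : Matrix n n R} {x : n → R} {s : R}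
    (h : diagonal x * M = s • (M * diagonal x)) {i j : n} (hM : M i j ≠ 0) :
    x i = s * x j := by
  have hij := congrFun₂ h i j
  simp only [mul_diagonal, diagonal_mul, smul_apply, smul_eq_mul] at hij
  exact mul_right_cancel₀ hM (by linear_combination hij)

theorem diagonal_eq_scalar_of_diagonal_mul_eq_smul {M : Matrix (Fin 3) (Fin 3) R}
    {x : Fin 3 → R} {s : R} (h : diagonal x * M = s • (M * diagonal x)) (hx : x 0 ≠ 0)
    (h00 : M 0 0 ≠ 0) (h01 : M 0 1 ≠ 0) (h12 : M 1 2 ≠ 0) :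
    diagonal x = scalar (Fin 3) (x 0) := by
  have hs : s = 1 :=
    (mul_eq_right₀ hx).1 (apply_eq_smul_apply_of_diagonal_mul_eq_smul h h00).symm
  have hx01 := apply_eq_smul_apply_of_diagonal_mul_eq_smul h h01
  have hx12 := apply_eq_smul_apply_of_diagonal_mul_eq_smul h h12
  rw [hs, one_mul] at hx01 hx12
  ext i j
  fin_cases i <;> fin_cases j <;> simp [hx01, hx12]

end Domain

end Matrix

theorem sym2Mat_det (a b c d : ℂ) : (sym2Mat a b c d).det = (a * d - b * c) ^ 3 := by
  rw [det_fin_three]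
  simp [sym2Mat]
  ring

theorem sym2Mat_diagonal {t : ℂ} (ht : t ≠ 0) :
    sym2Mat t 0 0 t⁻¹ = diagonal ![t ^ 2, 1, t⁻¹ ^ 2] := by
  ext i j
  fin_cases i <;> fin_cases j <;> simp [sym2Mat, ht]

theorem sym2Mat_unipotent (b : ℂ) :
    sym2Mat 1 b 0 1 = !![1, b, b ^ 2; 0, 1, 2 * b; 0, 0, 1] := by
  ext i j
  fin_cases i <;> fin_cases j <;> simp [sym2Mat]

/-- The centralizer in `PGL₃(ℂ)` of the image of the `Sym²` representation of
`SL₂(ℂ)` (projected to `PGL₃(ℂ)`) is the trivial subgroup; in particular its component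
group is trivial. -/
theorem stmt9 :
    Subgroup.centralizer
      {y : (GL (Fin 3) ℂ) ⧸ Subgroup.center (GL (Fin 3) ℂ) |
        ∃ A : GL (Fin 3) ℂ,
          (∃ a b c d : ℂ, a * d - b * c = 1 ∧
            (A : Matrix (Fin 3) (Fin 3) ℂ) = sym2Mat a b c d) ∧
          y = QuotientGroup.mk' (Subgroup.center (GL (Fin 3) ℂ)) A} = ⊥ := by
  refine (Subgroup.eq_bot_iff_forall _).2 fun x hx ↦ ?_
  obtain ⟨X, rfl⟩ := QuotientGroup.mk'_surjective _ x
  have hsym2 (a b c d : ℂ) (h : a * d - b * c = 1) : ∃ r : ℂ, r ^ 3 = 1 ∧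
      (X : Matrix (Fin 3) (Fin 3) ℂ) * sym2Mat a b c d = r • (sym2Mat a b c d * X) :=
    GeneralLinearGroup.exists_pow_card_eq_one_of_mk_mul_comm <| hx _
      ⟨.mkOfDetNeZero (sym2Mat a b c d) (by simp [sym2Mat_det, h]), ⟨a, b, c, d, h, rfl⟩, rfl⟩
  obtain ⟨r, hr, hD⟩ := hsym2 2 0 0 2⁻¹ (by norm_num)
  obtain ⟨s, -, hU⟩ := hsym2 1 1 0 1 (by norm_num)
  rw [sym2Mat_diagonal two_ne_zero] at hD
  rw [sym2Mat_unipotent] at hU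
  have hnorm : Function.Injective fun i ↦ ‖![(2 : ℂ) ^ 2, 1, 2⁻¹ ^ 2] i‖ := by
    intro i j
    fin_cases i <;> fin_cases j <;> norm_num
  have hdiag := isDiag_of_mul_diagonal_eq_smul
    (Complex.norm_eq_one_of_pow_eq_one hr three_ne_zero) hnorm hD
  rw [isDiag_iff_diagonal_diag] at hdiag
  have hX00 : X.val 0 0 ≠ 0 := by
    have hdet := (isUnits_det_units X).ne_zero
    rw [← hdiag, det_diagonal, Finset.prod_ne_zero_iff] at hdet
    exact hdet 0 (Finset.mem_univ _)
  rw [← hdiag] at hU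
  have hscalar := diagonal_eq_scalar_of_diagonal_mul_eq_smul hU hX00 (by simp) (by simp) (by simp)
  rw [QuotientGroup.mk'_apply, QuotientGroup.eq_one_iff,
    GeneralLinearGroup.mem_center_iff_val_mem_range_scalar]
  exact ⟨X.val 0 0, hscalar.symm.trans hdiag⟩
end

section
/- Fix a ∈ ℂˣ and let S = { [[0,1,0],[a,0,0],[0,0,c]] : c ∈ ℂˣ }. A matrix X ∈ GL₃(ℂ) satisfies X·A = ξ·A·X for some fixed cube root of unity ξ and for all A ∈ S if and only if ξ = 1 and X has the form [[x₁₁, x₁₂, 0],[a·x₁₂, x₁₁, 0],[0,0,x₃₃]] (with X invertible). -/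
open Matrix

/-- Fix `a ∈ ℂˣ` and `S = {[[0,1,0],[a,0,0],[0,0,c]] : c ∈ ℂˣ}`. An
invertible `X` satisfies `X·A = ξ·A·X` for a fixed cube root of unity `ξ` and all `A ∈ S`
iff `ξ = 1` and `X = [[x₁₁,x₁₂,0],[a·x₁₂,x₁₁,0],[0,0,x₃₃]]`. -/
theorem stmt10 (a : ℂ) (ha : a ≠ 0) (ξ : ℂ) (hξ : ξ ^ 3 = 1)
    (X : Matrix (Fin 3) (Fin 3) ℂ) (hX : IsUnit X.det) :
    (∀ c : ℂ, c ≠ 0 → X * !![0, 1, 0; a, 0, 0; 0, 0, c] =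
        ξ • (!![0, 1, 0; a, 0, 0; 0, 0, c] * X)) ↔
      (ξ = 1 ∧ X = !![X 0 0, X 0 1, 0; a * X 0 1, X 0 0, 0; 0, 0, X 2 2]) := by
  have hξ0 : ξ ≠ 0 := by
    intro h; rw [h] at hξ; norm_num at hξ
  constructor
  · intro h
    have h1 := h 1 one_ne_zero
    have h2 := h 2 two_ne_zero
    have e02a : X 0 2 = ξ * X 1 2 := by
      have := congrFun (congrFun h1 0) 2
      simp [Matrix.mul_apply, Matrix.smul_apply, Matrix.vecMul, dotProduct,
        Fin.sum_univ_three, Matrix.vecHead, Matrix.vecTail] at this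
      linear_combination this
    have e02b : X 0 2 * 2 = ξ * X 1 2 := by
      have := congrFun (congrFun h2 0) 2
      simp [Matrix.mul_apply, Matrix.smul_apply, Matrix.vecMul, dotProduct,
        Fin.sum_univ_three, Matrix.vecHead, Matrix.vecTail] at this
      linear_combination this
    have e02 : X 0 2 = 0 := by linear_combination e02b - e02a
    have e12 : X 1 2 = 0 := by
      have hz : ξ * X 1 2 = 0 := by linear_combination -e02a + e02
      exact (mul_eq_zero.mp hz).resolve_left hξ0
    have e20a : X 2 1 * a = ξ * X 2 0 := by
      have := congrFun (congrFun h1 2) 0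
      simp [Matrix.mul_apply, Matrix.smul_apply, Matrix.vecMul, dotProduct,
        Fin.sum_univ_three, Matrix.vecHead, Matrix.vecTail] at this
      linear_combination this
    have e20b : X 2 1 * a = ξ * (2 * X 2 0) := by
      have := congrFun (congrFun h2 2) 0
      simp [Matrix.mul_apply, Matrix.smul_apply, Matrix.vecMul, dotProduct,
        Fin.sum_univ_three, Matrix.vecHead, Matrix.vecTail] at this
      linear_combination this
    have e20 : X 2 0 = 0 := by
      have hz : ξ * X 2 0 = 0 := by linear_combination e20a - e20b
      exact (mul_eq_zero.mp hz).resolve_left hξ0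
    have e21 : X 2 1 = 0 := by
      have hz : X 2 1 * a = 0 := by rw [e20a, e20]; ring
      exact (mul_eq_zero.mp hz).resolve_right ha
    have e22 : X 2 2 = ξ * X 2 2 := by
      have := congrFun (congrFun h1 2) 2
      simp [Matrix.mul_apply, Matrix.smul_apply, Matrix.vecMul, dotProduct,
        Fin.sum_univ_three, Matrix.vecHead, Matrix.vecTail] at this
      linear_combination this
    have e00 : X 0 0 = ξ * X 1 1 := by
      have := congrFun (congrFun h1 0) 1
      simp [Matrix.mul_apply, Matrix.smul_apply, Matrix.vecMul, dotProduct,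
        Fin.sum_univ_three, Matrix.vecHead, Matrix.vecTail] at this
      linear_combination this
    have e10 : X 1 0 = ξ * (a * X 0 1) := by
      have := congrFun (congrFun h1 1) 1
      simp [Matrix.mul_apply, Matrix.smul_apply, Matrix.vecMul, dotProduct,
        Fin.sum_univ_three, Matrix.vecHead, Matrix.vecTail] at this
      linear_combination this
    have hξ1 : ξ = 1 := by
      by_contra hne
      have e22' : X 2 2 = 0 := by
        have hz : (ξ - 1) * X 2 2 = 0 := by linear_combination -e22
        rcases mul_eq_zero.mp hz with h' | h'
        · exact absurd (by linear_combination h') hne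
        · exact h'
      have hd : X.det = 0 := by
        rw [Matrix.det_fin_three, e20, e21, e22']; ring
      rw [hd] at hX
      exact (by norm_num : ¬ IsUnit (0 : ℂ)) hX
    subst hξ1
    refine ⟨rfl, ?_⟩
    ext i j
    fin_cases i <;> fin_cases j <;> simp [e02, e12, e20, e21] <;>
      first
        | linear_combination e10
        | linear_combination e00
        | linear_combination -e10
        | linear_combination -e00
  · rintro ⟨rfl, hXeq⟩
    intro c hc
    rw [one_smul, hXeq]
    ext i j
    fin_cases i <;> fin_cases j <;>
      simp [Matrix.mul_apply, Fin.sum_univ_three, Matrix.vecHead, Matrix.vecTail] <;> ring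
end

section
/- Let c ∈ ℂˣ with c ≠ 1, and A = [[1,1,0],[0,1,0],[0,0,c]] ∈ GL₃(ℂ). Then X ∈ GL₃(ℂ) satisfies X·A = ξ·A·X for some cube root of unity ξ if and only if ξ = 1 and X has the form [[x₁₁, x₁₂, 0],[0, x₁₁, 0],[0, 0, x₃₃]] with x₁₁, x₃₃ ∈ ℂˣ and x₁₂ ∈ ℂ. -/
open Matrix

/-- For `c ∈ ℂˣ`, `c ≠ 1`, and `A = [[1,1,0],[0,1,0],[0,0,c]]`, an
invertible `X` satisfies `X·A = ξ·A·X` for a cube root of unity `ξ` iff `ξ = 1` and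
`X = [[x₁₁,x₁₂,0],[0,x₁₁,0],[0,0,x₃₃]]` with `x₁₁, x₃₃ ∈ ℂˣ`. -/
theorem stmt12 (c : ℂ) (hc : c ≠ 0) (hc1 : c ≠ 1) (ξ : ℂ) (hξ : ξ ^ 3 = 1)
    (X : Matrix (Fin 3) (Fin 3) ℂ) (hX : IsUnit X.det) :
    X * !![1, 1, 0; 0, 1, 0; 0, 0, c] = ξ • (!![1, 1, 0; 0, 1, 0; 0, 0, c] * X) ↔
      (ξ = 1 ∧ X = !![X 0 0, X 0 1, 0; 0, X 0 0, 0; 0, 0, X 2 2] ∧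
        X 0 0 ≠ 0 ∧ X 2 2 ≠ 0) := by
  have hdet : X.det ≠ 0 := hX.ne_zero
  rw [Matrix.det_fin_three] at hdet
  have hc1' : c - 1 ≠ 0 := sub_ne_zero.2 hc1
  constructor
  · intro h
    have e : ∀ i j, (X * !![1, 1, 0; 0, 1, 0; 0, 0, c]) i j
        = ξ * ((!![1, 1, 0; 0, 1, 0; 0, 0, c] * X) i j) := by
      intro i j; rw [h]; simp
    have e00 := e 0 0
    have e01 := e 0 1
    have e02 := e 0 2
    have e10 := e 1 0
    have e11 := e 1 1
    have e12 := e 1 2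
    have e20 := e 2 0
    have e21 := e 2 1
    have e22 := e 2 2
    simp [Matrix.mul_apply, Fin.sum_univ_three, Matrix.vecHead, Matrix.vecTail]
      at e00 e01 e02 e10 e11 e12 e20 e21 e22
    have hξ1 : ξ = 1 := by
      by_contra hne
      have h1ξ : (1 : ℂ) - ξ ≠ 0 := sub_ne_zero.2 (Ne.symm hne)
      have hx10 : X 1 0 = 0 := by
        have h' : X 1 0 * (1 - ξ) = 0 := by linear_combination e10
        exact (mul_eq_zero.1 h').resolve_right h1ξ
      have hx11 : X 1 1 = 0 := by
        have h' : X 1 1 * (1 - ξ) = 0 := by linear_combination e11 - hx10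
        exact (mul_eq_zero.1 h').resolve_right h1ξ
      have hx00 : X 0 0 = 0 := by
        have h' : X 0 0 * (1 - ξ) = 0 := by linear_combination e00 + ξ * hx10
        exact (mul_eq_zero.1 h').resolve_right h1ξ
      have hx01 : X 0 1 = 0 := by
        have h' : X 0 1 * (1 - ξ) = 0 := by linear_combination e01 - hx00 + ξ * hx11
        exact (mul_eq_zero.1 h').resolve_right h1ξ
      apply hdet
      linear_combination (X 1 1 * X 2 2 - X 1 2 * X 2 1) * hx00
        - (X 1 0 * X 2 2 - X 1 2 * X 2 0) * hx01
        + X 0 2 * X 2 1 * hx10 - X 0 2 * X 2 0 * hx11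
    subst hξ1
    simp only [one_mul] at e00 e01 e02 e10 e11 e12 e20 e21 e22
    have hx10 : X 1 0 = 0 := by linear_combination -e00
    have hx12 : X 1 2 = 0 := by
      have h' : X 1 2 * (c - 1) = 0 := by linear_combination e12
      exact (mul_eq_zero.1 h').resolve_right hc1'
    have hx02 : X 0 2 = 0 := by
      have h' : X 0 2 * (c - 1) = 0 := by linear_combination e02 + hx12
      exact (mul_eq_zero.1 h').resolve_right hc1'
    have hx20 : X 2 0 = 0 := by
      have h' : X 2 0 * (c - 1) = 0 := by linear_combination -e20
      exact (mul_eq_zero.1 h').resolve_right hc1'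
    have hx21 : X 2 1 = 0 := by
      have h' : X 2 1 * (c - 1) = 0 := by linear_combination -e21 + hx20
      exact (mul_eq_zero.1 h').resolve_right hc1'
    have hx11 : X 1 1 = X 0 0 := by linear_combination -e01
    refine ⟨rfl, ?_, ?_, ?_⟩
    · ext i j
      fin_cases i <;> fin_cases j <;>
        simp [Matrix.vecHead, Matrix.vecTail, hx10, hx12, hx02, hx20, hx21, hx11]
    · intro h0
      apply hdet
      rw [hx10, hx12, hx02, hx20, hx21, hx11, h0]; ring
    · intro h2
      apply hdet
      rw [hx10, hx12, hx02, hx20, hx21, hx11, h2]; ring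
  · rintro ⟨hξ1, hXeq, -, -⟩
    subst hξ1
    rw [one_smul]
    have h10 : X 1 0 = 0 := by have := congrFun (congrFun hXeq 1) 0; simpa using this
    have h11 : X 1 1 = X 0 0 := by have := congrFun (congrFun hXeq 1) 1; simpa using this
    have h12 : X 1 2 = 0 := by have := congrFun (congrFun hXeq 1) 2; simpa using this
    have h02 : X 0 2 = 0 := by have := congrFun (congrFun hXeq 0) 2; simpa using this
    have h20 : X 2 0 = 0 := by have := congrFun (congrFun hXeq 2) 0; simpa using this
    have h21 : X 2 1 = 0 := by have := congrFun (congrFun hXeq 2) 1; simpa using this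
    ext i j
    fin_cases i <;> fin_cases j <;>
      simp [Matrix.mul_apply, Fin.sum_univ_three, Matrix.vecHead, Matrix.vecTail,
        h10, h11, h12, h02, h20, h21] <;> ring
end

section
/- Let c ∈ ℂˣ with c ≠ 1. The intersection in PGL₃(ℂ) of the centralizers of [A] and [B], where A = [[0,1,0],[2,0,0],[0,0,c]] and B = [[1,1,0],[0,1,0],[0,0,c]], equals the image of the subgroup { diag(x, x, 1) : x ∈ ℂˣ } of GL₃(ℂ). In particular this intersection is connected, so the associated component group is trivial. -/
open Matrix

/-
Conjugating `B = J₂(1) ⊕ (c)` onto `s • B` forces `s = 1` (otherwise the first two rows of the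
conjugating matrix vanish on the first two columns), and since `c ≠ 1` the commutant of `B`
consists of the matrices `[[a, b, 0], [0, a, 0], [0, 0, d]]`. The relation with `A` kills `b`,
so in `PGL₃(ℂ)` the common centralizer is the image of `x ↦ diag(x, x, 1)`, a continuous image
of the connected group `ℂˣ`.
-/

theorem QuotientGroup.mk'_mem_centralizer_singleton_iff {G : Type*} [Group G] (N : Subgroup G)
    [N.Normal] (a x : G) :
    QuotientGroup.mk' N x ∈ Subgroup.centralizer {QuotientGroup.mk' N a} ↔
      ∃ z ∈ N, a * x * z = x * a := by
  rw [Subgroup.mem_centralizer_singleton_iff, eq_comm, ← map_mul, ← map_mul,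
    QuotientGroup.mk'_eq_mk']

namespace Matrix.GeneralLinearGroup

variable {n R : Type*} [Fintype n] [DecidableEq n] [CommRing R]

theorem mk'_mem_centralizer_singleton_iff (A X : GL n R) :
    QuotientGroup.mk' (Subgroup.center (GL n R)) X ∈
        Subgroup.centralizer {QuotientGroup.mk' (Subgroup.center (GL n R)) A} ↔
      ∃ r : Rˣ, (X : Matrix n n R) * A = (r : R) • ((A : Matrix n n R) * X) := by
  simp only [QuotientGroup.mk'_mem_centralizer_singleton_iff, center_eq_range_scalar,
    MonoidHom.mem_range, exists_exists_eq_and]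
  simp [Units.ext_iff, smul_eq_mul_diagonal, eq_comm]

end Matrix.GeneralLinearGroup

section ThreeByThree

variable {K : Type*} [Field K]

theorem det_eq_zero_of_mul_eq_smul_mul {c s : K} (hs : s ≠ 1) {M : Matrix (Fin 3) (Fin 3) K}
    (h : M * !![1, 1, 0; 0, 1, 0; 0, 0, c] = s • (!![1, 1, 0; 0, 1, 0; 0, 0, c] * M)) :
    M.det = 0 := by
  have entry (i j : Fin 3) := congrFun₂ h i j
  have e00 : M 0 0 = s * (M 0 0 + M 1 0) := by
    simpa [mul_apply, vecMul, dotProduct, Fin.sum_univ_three] using entry 0 0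
  have e01 : M 0 0 + M 0 1 = s * (M 0 1 + M 1 1) := by
    simpa [mul_apply, vecMul, dotProduct, Fin.sum_univ_three] using entry 0 1
  have e10 : M 1 0 = s * M 1 0 := by
    simpa [mul_apply, vecMul, dotProduct, Fin.sum_univ_three] using entry 1 0
  have e11 : M 1 0 + M 1 1 = s * M 1 1 := by
    simpa [mul_apply, vecMul, dotProduct, Fin.sum_univ_three] using entry 1 1
  have hs : s - 1 ≠ 0 := sub_ne_zero.mpr hs
  have h10 : M 1 0 = 0 := by
    simpa [hs] using (by linear_combination -e10 : (s - 1) * M 1 0 = 0)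
  have h11 : M 1 1 = 0 := by
    simpa [hs] using (by linear_combination -e11 + h10 : (s - 1) * M 1 1 = 0)
  have h00 : M 0 0 = 0 := by
    simpa [hs] using (by linear_combination -e00 - s * h10 : (s - 1) * M 0 0 = 0)
  have h01 : M 0 1 = 0 := by
    simpa [hs] using (by linear_combination -e01 + h00 - s * h11 : (s - 1) * M 0 1 = 0)
  rw [det_fin_three, h00, h01, h10, h11]
  ring

theorem eq_block_of_commute {c : K} (hc : c ≠ 1) {M : Matrix (Fin 3) (Fin 3) K}
    (h : Commute M !![1, 1, 0; 0, 1, 0; 0, 0, c]) :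
    M = !![M 0 0, M 0 1, 0; 0, M 0 0, 0; 0, 0, M 2 2] := by
  have entry (i j : Fin 3) := congrFun₂ h i j
  have h10 : M 1 0 = 0 := by simpa [mul_apply, Fin.sum_univ_three] using entry 0 0
  have e01 : M 0 0 + M 0 1 = M 0 1 + M 1 1 := by
    simpa [mul_apply, Fin.sum_univ_three] using entry 0 1
  have e02 : M 0 2 * c = M 0 2 + M 1 2 := by simpa [mul_apply, Fin.sum_univ_three] using entry 0 2
  have e12 : M 1 2 * c = M 1 2 := by simpa [mul_apply, Fin.sum_univ_three] using entry 1 2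
  have e20 : M 2 0 = c * M 2 0 := by simpa [mul_apply, Fin.sum_univ_three] using entry 2 0
  have e21 : M 2 0 + M 2 1 = c * M 2 1 := by simpa [mul_apply, Fin.sum_univ_three] using entry 2 1
  have hc : c - 1 ≠ 0 := sub_ne_zero.mpr hc
  have h12 : M 1 2 = 0 := by
    simpa [hc] using (by linear_combination e12 : (c - 1) * M 1 2 = 0)
  have h02 : M 0 2 = 0 := by
    simpa [hc] using (by linear_combination e02 + h12 : (c - 1) * M 0 2 = 0)
  have h20 : M 2 0 = 0 := by
    simpa [hc] using (by linear_combination -e20 : (c - 1) * M 2 0 = 0)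
  have h21 : M 2 1 = 0 := by
    simpa [hc] using (by linear_combination -e21 + h20 : (c - 1) * M 2 1 = 0)
  have h11 : M 1 1 = M 0 0 := by linear_combination -e01
  ext i j
  fin_cases i <;> fin_cases j <;> simp [h10, h02, h11, h12, h20, h21]

theorem eq_zero_of_mul_eq_smul_mul [NeZero (2 : K)] {a b d c r : K}
    (h : !![a, b, 0; 0, a, 0; 0, 0, d] * !![0, 1, 0; 2, 0, 0; 0, 0, c] =
      r • (!![0, 1, 0; 2, 0, 0; 0, 0, c] * !![a, b, 0; 0, a, 0; 0, 0, d])) : b = 0 := by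
  simpa [two_ne_zero] using congrFun₂ h 0 0

theorem eq_diagonal_of_mul_eq_smul_mul [NeZero (2 : K)] {c r s : K} (hc : c ≠ 1)
    {M : Matrix (Fin 3) (Fin 3) K} (hM : M.det ≠ 0)
    (hA : M * !![0, 1, 0; 2, 0, 0; 0, 0, c] = r • (!![0, 1, 0; 2, 0, 0; 0, 0, c] * M))
    (hB : M * !![1, 1, 0; 0, 1, 0; 0, 0, c] = s • (!![1, 1, 0; 0, 1, 0; 0, 0, c] * M)) :
    M = diagonal ![M 0 0, M 0 0, M 2 2] := by
  obtain rfl : s = 1 := by_contra fun hs ↦ hM (det_eq_zero_of_mul_eq_smul_mul hs hB)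
  have hM' := eq_block_of_commute (M := M) hc (by rwa [one_smul] at hB)
  rw [hM'] at hA
  conv_lhs => rw [hM', eq_zero_of_mul_eq_smul_mul hA]
  ext i j
  fin_cases i <;> fin_cases j <;> rfl

end ThreeByThree

theorem commute_diagonal_block {R : Type*} [CommRing R] (x y a b d e f : R) :
    Commute (diagonal ![x, x, y]) !![a, b, 0; d, e, 0; 0, 0, f] := by
  ext i j
  fin_cases i <;> fin_cases j <;> simp [mul_apply, Fin.sum_univ_three, mul_comm]

section DiagXXOne

variable (K : Type*) [CommRing K]

def diagXXOne : K →* Matrix (Fin 3) (Fin 3) K :=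
  (diagonalRingHom (Fin 3) K).toMonoidHom.comp (MonoidHom.pi ![.id K, .id K, 1])

variable {K}

theorem diagXXOne_apply (x : K) : diagXXOne K x = diagonal ![x, x, 1] := by
  simp only [diagXXOne, MonoidHom.coe_comp, Function.comp_apply,
    RingHom.toMonoidHom_eq_coe, MonoidHom.coe_coe, diagonalRingHom_apply]
  congr
  ext i
  fin_cases i <;> rfl

theorem continuous_diagXXOne [TopologicalSpace K] : Continuous (diagXXOne K) := by
  simp only [funext diagXXOne_apply]
  fun_prop

end DiagXXOne

section PGL

variable {K : Type*} [Field K]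

theorem range_units_map_diagXXOne :
    Set.range (Units.map (diagXXOne K)) =
      {X : GL (Fin 3) K | ∃ x : K, x ≠ 0 ∧
        (X : Matrix (Fin 3) (Fin 3) K) = diagonal ![x, x, 1]} := by
  ext X
  constructor
  · rintro ⟨u, rfl⟩
    exact ⟨u, u.ne_zero, diagXXOne_apply _⟩
  · rintro ⟨x, hx, hX⟩
    exact ⟨Units.mk0 x hx, Units.ext ((diagXXOne_apply x).trans hX.symm)⟩

theorem mk'_mem_image_diagXXOne {X : GL (Fin 3) K} {a d : K}
    (hX : (X : Matrix (Fin 3) (Fin 3) K) = diagonal ![a, a, d]) :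
    QuotientGroup.mk' (Subgroup.center (GL (Fin 3) K)) X ∈
      QuotientGroup.mk' (Subgroup.center (GL (Fin 3) K)) ''
        Set.range (Units.map (diagXXOne K)) := by
  have hdet : a * a * d ≠ 0 := by
    simpa [hX, det_diagonal, Fin.prod_univ_three] using X.det_ne_zero
  have ha : a ≠ 0 := left_ne_zero_of_mul (left_ne_zero_of_mul hdet)
  have hd : d ≠ 0 := right_ne_zero_of_mul hdet
  refine ⟨_, ⟨Units.mk0 (a / d) (div_ne_zero ha hd), rfl⟩, ?_⟩
  rw [QuotientGroup.mk'_eq_mk']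
  refine ⟨GeneralLinearGroup.scalar (Fin 3) (Units.mk0 d hd), ?_, Units.ext ?_⟩
  · rw [GeneralLinearGroup.center_eq_range_scalar]
    exact ⟨_, rfl⟩
  · simp only [Units.val_mul, Units.coe_map, Units.val_mk0, diagXXOne_apply,
      GeneralLinearGroup.coe_scalar, scalar_apply, diagonal_mul_diagonal, hX,
      diagonal_eq_diagonal_iff]
    intro i
    fin_cases i <;> simp [hd]

theorem isConnected_image_range_diagXXOne [TopologicalSpace K] [ConnectedSpace Kˣ] :
    IsConnected (QuotientGroup.mk' (Subgroup.center (GL (Fin 3) K)) ''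
      Set.range (Units.map (diagXXOne K))) := by
  rw [← Set.range_comp]
  exact isConnected_range (QuotientGroup.continuous_mk.comp (continuous_diagXXOne.units_map _))

end PGL

theorem stmt13_general (c : ℂ) (hc1 : c ≠ 1)
    (A B : GL (Fin 3) ℂ)
    (hA : (A : Matrix (Fin 3) (Fin 3) ℂ) = !![0, 1, 0; 2, 0, 0; 0, 0, c])
    (hB : (B : Matrix (Fin 3) (Fin 3) ℂ) = !![1, 1, 0; 0, 1, 0; 0, 0, c]) :
    ((Subgroup.centralizer {QuotientGroup.mk' (Subgroup.center (GL (Fin 3) ℂ)) A} ⊓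
        Subgroup.centralizer {QuotientGroup.mk' (Subgroup.center (GL (Fin 3) ℂ)) B} :
        Subgroup ((GL (Fin 3) ℂ) ⧸ Subgroup.center (GL (Fin 3) ℂ))) :
        Set ((GL (Fin 3) ℂ) ⧸ Subgroup.center (GL (Fin 3) ℂ))) =
      (QuotientGroup.mk' (Subgroup.center (GL (Fin 3) ℂ))) ''
        {X : GL (Fin 3) ℂ | ∃ x : ℂ, x ≠ 0 ∧
          (X : Matrix (Fin 3) (Fin 3) ℂ) = Matrix.diagonal ![x, x, 1]} ∧
    IsConnected
      ((Subgroup.centralizer {QuotientGroup.mk' (Subgroup.center (GL (Fin 3) ℂ)) A} ⊓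
        Subgroup.centralizer {QuotientGroup.mk' (Subgroup.center (GL (Fin 3) ℂ)) B} :
        Subgroup ((GL (Fin 3) ℂ) ⧸ Subgroup.center (GL (Fin 3) ℂ))) :
        Set ((GL (Fin 3) ℂ) ⧸ Subgroup.center (GL (Fin 3) ℂ))) := by
  rw [← range_units_map_diagXXOne]
  suffices h : _ = QuotientGroup.mk' _ '' Set.range (Units.map (diagXXOne ℂ)) from
    ⟨h, h ▸ isConnected_image_range_diagXXOne⟩
  ext q
  simp only [SetLike.mem_coe, Subgroup.mem_inf]
  constructor
  · obtain ⟨X, rfl⟩ := QuotientGroup.mk'_surjective _ q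
    simp only [GeneralLinearGroup.mk'_mem_centralizer_singleton_iff, hA, hB]
    rintro ⟨⟨r, hXA⟩, s, hXB⟩
    exact mk'_mem_image_diagXXOne (eq_diagonal_of_mul_eq_smul_mul hc1 X.det_ne_zero hXA hXB)
  · rintro ⟨_, ⟨x, rfl⟩, rfl⟩
    simp only [GeneralLinearGroup.mk'_mem_centralizer_singleton_iff, hA, hB, Units.coe_map,
      diagXXOne_apply]
    exact ⟨⟨1, by simpa using (commute_diagonal_block _ _ _ _ _ _ _).eq⟩,
      ⟨1, by simpa using (commute_diagonal_block _ _ _ _ _ _ _).eq⟩⟩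

/-- For `c ∈ ℂˣ`, `c ≠ 1`, `A = [[0,1,0],[2,0,0],[0,0,c]]` and
`B = [[1,1,0],[0,1,0],[0,0,c]]`, the intersection in `PGL₃(ℂ)` of the centralizers of
`[A]` and `[B]` is the image of `{diag(x,x,1) : x ∈ ℂˣ}`, and it is connected (so the
associated component group is trivial). -/
theorem stmt13 (c : ℂ) (hc : c ≠ 0) (hc1 : c ≠ 1)
    (A B : GL (Fin 3) ℂ)
    (hA : (A : Matrix (Fin 3) (Fin 3) ℂ) = !![0, 1, 0; 2, 0, 0; 0, 0, c])
    (hB : (B : Matrix (Fin 3) (Fin 3) ℂ) = !![1, 1, 0; 0, 1, 0; 0, 0, c]) :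
    ((Subgroup.centralizer {QuotientGroup.mk' (Subgroup.center (GL (Fin 3) ℂ)) A} ⊓
        Subgroup.centralizer {QuotientGroup.mk' (Subgroup.center (GL (Fin 3) ℂ)) B} :
        Subgroup ((GL (Fin 3) ℂ) ⧸ Subgroup.center (GL (Fin 3) ℂ))) :
        Set ((GL (Fin 3) ℂ) ⧸ Subgroup.center (GL (Fin 3) ℂ))) =
      (QuotientGroup.mk' (Subgroup.center (GL (Fin 3) ℂ))) ''
        {X : GL (Fin 3) ℂ | ∃ x : ℂ, x ≠ 0 ∧
          (X : Matrix (Fin 3) (Fin 3) ℂ) = Matrix.diagonal ![x, x, 1]} ∧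
    IsConnected
      ((Subgroup.centralizer {QuotientGroup.mk' (Subgroup.center (GL (Fin 3) ℂ)) A} ⊓
        Subgroup.centralizer {QuotientGroup.mk' (Subgroup.center (GL (Fin 3) ℂ)) B} :
        Subgroup ((GL (Fin 3) ℂ) ⧸ Subgroup.center (GL (Fin 3) ℂ))) :
        Set ((GL (Fin 3) ℂ) ⧸ Subgroup.center (GL (Fin 3) ℂ))) :=
  stmt13_general c hc1 A B hA hB
end

section
/- Let c ∈ ℂˣ with c ≠ 1. The intersection in PGL₃(ℂ) of the centralizers of [A] and [B], where A = [[0,1,0],[1,0,0],[0,0,c]] and B = [[−1,0,0],[0,1,0],[0,0,c]], equals the image of { diag(x, x, y) : x, y ∈ ℂˣ } in PGL₃(ℂ); in particular it is connected and the associated component group is trivial. -/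
/-!
Conjugation preserves the trace, so if `[X]` centralizes `[M]` in `PGLₙ`, i.e.
`X M X⁻¹ = r M` for a scalar `r`, then `tr M = r tr M`; as `tr A = tr B = c ≠ 0`, this forces
`r = 1`. So the centralizer in question is the image of the honest commutant of `A` and `B` in
`GL₃`. Commuting with `B = diag(-1, 1, c)` kills the off-diagonal entries except possibly those
linking the `-1` and `c` eigenspaces, and commuting with `A` then kills these too and forces
the first two diagonal entries to agree. The resulting torus `diag(x, x, y)` is a continuous
image of `ℂˣ × ℂˣ`, hence connected.
-/

open Matrix

namespace Matrix.GeneralLinearGroup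

variable {n : Type*} [Fintype n] [DecidableEq n]

theorem commute_mk_center_iff {K : Type*} [Field K] {X M : GL n K}
    (hM : trace (M : Matrix n n K) ≠ 0) :
    Commute (QuotientGroup.mk' (Subgroup.center (GL n K)) X)
        (QuotientGroup.mk' (Subgroup.center (GL n K)) M) ↔ Commute X M := by
  refine ⟨fun h ↦ ?_, fun h ↦ h.map _⟩
  obtain ⟨z, hz, hXMz⟩ := (QuotientGroup.mk'_eq_mk' _).mp
    (by simpa only [map_mul] using h.eq :
      QuotientGroup.mk' _ (X * M) = QuotientGroup.mk' _ (M * X))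
  obtain ⟨r, hr⟩ := mem_center_iff_val_mem_range_scalar.mp hz
  have hconj : X * M * X⁻¹ * z = M := by
    rw [mul_assoc, Subgroup.mem_center_iff.mp hz X⁻¹, ← mul_assoc, hXMz, mul_inv_cancel_right]
  have hr1 : r = 1 := by
    have htrace := congrArg (fun g : GL n K ↦ trace (g : Matrix n n K)) hconj
    simp only [Units.val_mul, ← hr, scalar_apply, ← smul_one_eq_diagonal, mul_smul_comm,
      mul_one, trace_smul, trace_units_conj, smul_eq_mul] at htrace
    simpa [hM] using htrace
  have hz1 : z = 1 := Units.ext (by rw [← hr, hr1, map_one, Units.val_one])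
  rwa [hz1, mul_one] at hXMz

variable {R : Type*} [CommRing R]

def diagonalUnits (d : n → Rˣ) : GL n R :=
  ⟨diagonal fun i ↦ d i, diagonal fun i ↦ ↑(d i)⁻¹, by simp, by simp⟩

theorem continuous_diagonalUnits [TopologicalSpace R] :
    Continuous (diagonalUnits : (n → Rˣ) → GL n R) :=
  Units.continuous_iff.mpr
    ⟨by unfold diagonalUnits; fun_prop, by unfold diagonalUnits; fun_prop⟩

theorem ne_zero_of_val_eq_diagonal {K : Type*} [Field K] {X : GL n K} {d : n → K}
    (hX : (X : Matrix n n K) = diagonal d) (i : n) : d i ≠ 0 :=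
  Finset.prod_ne_zero_iff.mp (by simpa [hX] using X.det_ne_zero) i (Finset.mem_univ i)

end Matrix.GeneralLinearGroup

open Matrix.GeneralLinearGroup

theorem commute_and_commute_iff_eq_diagonal {K : Type*} [Field K] [CharZero K] {c : K}
    (hc1 : c ≠ 1) (m : Matrix (Fin 3) (Fin 3) K) :
    Commute m !![0, 1, 0; 1, 0, 0; 0, 0, c] ∧ Commute m !![-1, 0, 0; 0, 1, 0; 0, 0, c] ↔
      ∃ x y, m = diagonal ![x, x, y] := by
  simp only [Commute, SemiconjBy]
  constructor
  · rintro ⟨hA, hB⟩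
    rw [eta_fin_three m] at hA hB ⊢
    simp only [Fin.isValue, cons_mul, Nat.succ_eq_add_one, Nat.reduceAdd, vecMul_cons, head_cons,
      smul_cons, smul_eq_mul, mul_zero, mul_one, smul_empty, tail_cons, empty_vecMul, add_zero,
      add_cons, zero_add, empty_add_empty, empty_mul, Equiv.symm_apply_apply, zero_smul, one_smul,
      EmbeddingLike.apply_eq_iff_eq, vecCons_inj, and_true, mul_neg, neg_smul, neg_cons, neg_empty,
      CharZero.eq_neg_self_iff, true_and, CharZero.neg_eq_self_iff] at hA hB
    obtain ⟨⟨-, h00, -⟩, ⟨-, -, h12⟩, -, h20, -⟩ := hA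
    obtain ⟨⟨h01, -⟩, ⟨h10, hB12⟩, -, hB21, -⟩ := hB
    have e12 : m 1 2 = 0 := by
      simpa [sub_eq_zero, hc1] using (by linear_combination hB12 : m 1 2 * (c - 1) = 0)
    have e21 : m 2 1 = 0 := by
      simpa [sub_eq_zero, hc1] using (by linear_combination -hB21 : (c - 1) * m 2 1 = 0)
    refine ⟨m 0 0, m 2 2, ?_⟩
    rw [diagonal_vec3, h20, ← h12, e12, e21, h01, h10, h00]
    simp
  · rintro ⟨x, y, rfl⟩
    simp [diagonal_vec3, mul_comm]

theorem range_diagonalUnits_vec3 {K : Type*} [Field K] :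
    Set.range (fun p : Kˣ × Kˣ ↦ diagonalUnits ![p.1, p.1, p.2]) =
      {X : GL (Fin 3) K | ∃ x y : K, x ≠ 0 ∧ y ≠ 0 ∧
        (X : Matrix (Fin 3) (Fin 3) K) = diagonal ![x, x, y]} := by
  ext X
  constructor
  · rintro ⟨⟨u, v⟩, rfl⟩
    exact ⟨u, v, u.ne_zero, v.ne_zero, by simp [diagonalUnits, diagonal_fin_three]⟩
  · rintro ⟨x, y, hx, hy, hX⟩
    exact ⟨(Units.mk0 x hx, Units.mk0 y hy),
      Units.ext (by simp [diagonalUnits, hX, diagonal_fin_three])⟩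

/-- For `c ∈ ℂˣ`, `c ≠ 1`, `A = [[0,1,0],[1,0,0],[0,0,c]]` and
`B = [[-1,0,0],[0,1,0],[0,0,c]]`, the intersection in `PGL₃(ℂ)` of the centralizers of
`[A]` and `[B]` is the image of `{diag(x,x,y) : x, y ∈ ℂˣ}`, and it is connected (so the
associated component group is trivial). -/
theorem stmt14 (c : ℂ) (hc : c ≠ 0) (hc1 : c ≠ 1)
    (A B : GL (Fin 3) ℂ)
    (hA : (A : Matrix (Fin 3) (Fin 3) ℂ) = !![0, 1, 0; 1, 0, 0; 0, 0, c])
    (hB : (B : Matrix (Fin 3) (Fin 3) ℂ) = !![-1, 0, 0; 0, 1, 0; 0, 0, c]) :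
    ((Subgroup.centralizer {QuotientGroup.mk' (Subgroup.center (GL (Fin 3) ℂ)) A} ⊓
        Subgroup.centralizer {QuotientGroup.mk' (Subgroup.center (GL (Fin 3) ℂ)) B} :
        Subgroup ((GL (Fin 3) ℂ) ⧸ Subgroup.center (GL (Fin 3) ℂ))) :
        Set ((GL (Fin 3) ℂ) ⧸ Subgroup.center (GL (Fin 3) ℂ))) =
      (QuotientGroup.mk' (Subgroup.center (GL (Fin 3) ℂ))) ''
        {X : GL (Fin 3) ℂ | ∃ x y : ℂ, x ≠ 0 ∧ y ≠ 0 ∧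
          (X : Matrix (Fin 3) (Fin 3) ℂ) = Matrix.diagonal ![x, x, y]} ∧
    IsConnected
      ((Subgroup.centralizer {QuotientGroup.mk' (Subgroup.center (GL (Fin 3) ℂ)) A} ⊓
        Subgroup.centralizer {QuotientGroup.mk' (Subgroup.center (GL (Fin 3) ℂ)) B} :
        Subgroup ((GL (Fin 3) ℂ) ⧸ Subgroup.center (GL (Fin 3) ℂ))) :
        Set ((GL (Fin 3) ℂ) ⧸ Subgroup.center (GL (Fin 3) ℂ))) := by
  set π := QuotientGroup.mk' (Subgroup.center (GL (Fin 3) ℂ))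
  have htrA : trace (A : Matrix (Fin 3) (Fin 3) ℂ) ≠ 0 := by
    simpa [hA, trace_fin_three] using hc
  have htrB : trace (B : Matrix (Fin 3) (Fin 3) ℂ) ≠ 0 := by
    simpa [hB, trace_fin_three] using hc
  have hpre : π ⁻¹' ((Subgroup.centralizer {π A} ⊓ Subgroup.centralizer {π B} :
      Subgroup (GL (Fin 3) ℂ ⧸ Subgroup.center (GL (Fin 3) ℂ))) : Set _) =
      {X : GL (Fin 3) ℂ | ∃ x y : ℂ, x ≠ 0 ∧ y ≠ 0 ∧
        (X : Matrix (Fin 3) (Fin 3) ℂ) = diagonal ![x, x, y]} := by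
    ext X
    simp only [Set.mem_preimage, SetLike.mem_coe, Subgroup.mem_inf,
      Subgroup.mem_centralizer_singleton_iff]
    change Commute (π X) (π A) ∧ Commute (π X) (π B) ↔ _
    rw [commute_mk_center_iff htrA, commute_mk_center_iff htrB, ← Commute.units_val_iff,
      ← Commute.units_val_iff, hA, hB, commute_and_commute_iff_eq_diagonal hc1]
    exact ⟨fun ⟨x, y, h⟩ ↦
      ⟨x, y, ne_zero_of_val_eq_diagonal h 0, ne_zero_of_val_eq_diagonal h 2, h⟩,
      fun ⟨x, y, _, _, h⟩ ↦ ⟨x, y, h⟩⟩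
  have hcent := (Set.image_preimage_eq _ (QuotientGroup.mk'_surjective _)).symm.trans
    (congrArg (π '' ·) hpre)
  refine ⟨hcent, ?_⟩
  rw [hcent, ← range_diagonalUnits_vec3, ← Set.range_comp]
  exact isConnected_range (QuotientGroup.continuous_mk.comp <| continuous_diagonalUnits.comp <|
    by fun_prop)
end

section
/- Let S = { [[a,b,0],[c,d,0],[0,0,1]] : a,b,c,d ∈ ℂ, ad−bc ≠ 0 } ⊂ GL₃(ℂ). Then X ∈ GL₃(ℂ) satisfies: for every A ∈ S there exists a cube root of unity ξ (possibly depending on A) with X·A = ξ·A·X, if and only if X = diag(x₁₁, x₁₁, x₂₂) for some x₁₁, x₂₂ ∈ ℂˣ. -/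
open Matrix

/-- With `S = {[[a,b,0],[c,d,0],[0,0,1]] : ad−bc ≠ 0}`, an invertible `X`
satisfies `X·A = ξ·A·X` for some cube root of unity `ξ` (depending on `A`) for every
`A ∈ S` iff `X = diag(x₁₁, x₁₁, x₂₂)` with `x₁₁, x₂₂ ∈ ℂˣ`. -/
theorem stmt15 (X : Matrix (Fin 3) (Fin 3) ℂ) (hX : IsUnit X.det) :
    (∀ A : Matrix (Fin 3) (Fin 3) ℂ,
        (∃ a b c d : ℂ, a * d - b * c ≠ 0 ∧ A = !![a, b, 0; c, d, 0; 0, 0, 1]) →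
        ∃ ξ : ℂ, ξ ^ 3 = 1 ∧ X * A = ξ • (A * X)) ↔
      ∃ x y : ℂˣ, X = Matrix.diagonal ![(x : ℂ), (x : ℂ), (y : ℂ)] := by
  constructor
  · intro h
    have key : ∀ a b c d : ℂ, a * d - b * c ≠ 0 → a + d + 1 ≠ 0 →
        X * !![a, b, 0; c, d, 0; 0, 0, 1] = !![a, b, 0; c, d, 0; 0, 0, 1] * X := by
      intro a b c d hdet htr
      obtain ⟨ξ, hξ3, hξ⟩ := h _ ⟨a, b, c, d, hdet, rfl⟩
      set A := !![a, b, 0; c, d, 0; 0, 0, 1] with hA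
      have hXinv : X * X⁻¹ = 1 := Matrix.mul_nonsing_inv X hX
      have e1 : X * A * X⁻¹ = ξ • A := by
        rw [hξ, Matrix.smul_mul, Matrix.mul_assoc, hXinv, Matrix.mul_one]
      have e2 : (X * A * X⁻¹).trace = A.trace := by
        rw [Matrix.trace_mul_cycle, Matrix.nonsing_inv_mul X hX, Matrix.one_mul]
      have e3 : A.trace = ξ * A.trace := by
        conv_lhs => rw [← e2]
        rw [e1, Matrix.trace_smul, smul_eq_mul]
      have htrA : A.trace = a + d + 1 := by
        simp [hA, Matrix.trace_fin_three]
      rw [htrA] at e3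
      have hξ1 : ξ = 1 := by
        have : (ξ - 1) * (a + d + 1) = 0 := by linear_combination -e3
        rcases mul_eq_zero.1 this with h' | h'
        · exact sub_eq_zero.1 h'
        · exact absurd h' htr
      rw [hξ, hξ1, one_smul]
    have h1 := key 1 1 0 1 (by norm_num) (by norm_num)
    have h3 := key 2 0 0 1 (by norm_num) (by norm_num)
    have h4 := key 1 0 0 2 (by norm_num) (by norm_num)
    have q01 : X 0 1 = 0 := by
      have := congrFun (congrFun h3 0) 1
      simp [Matrix.mul_apply, Fin.sum_univ_three, Matrix.vecHead, Matrix.vecTail] at this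
      linear_combination -this
    have q02 : X 0 2 = 0 := by
      have := congrFun (congrFun h3 0) 2
      simp [Matrix.mul_apply, Fin.sum_univ_three, Matrix.vecHead, Matrix.vecTail] at this
      linear_combination -this
    have q10 : X 1 0 = 0 := by
      have := congrFun (congrFun h3 1) 0
      simp [Matrix.mul_apply, Fin.sum_univ_three, Matrix.vecHead, Matrix.vecTail] at this
      linear_combination this
    have q20 : X 2 0 = 0 := by
      have := congrFun (congrFun h3 2) 0
      simp [Matrix.mul_apply, Fin.sum_univ_three, Matrix.vecHead, Matrix.vecTail] at this
      linear_combination this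
    have q12 : X 1 2 = 0 := by
      have := congrFun (congrFun h4 1) 2
      simp [Matrix.mul_apply, Fin.sum_univ_three, Matrix.vecHead, Matrix.vecTail] at this
      linear_combination -this
    have q21 : X 2 1 = 0 := by
      have := congrFun (congrFun h4 2) 1
      simp [Matrix.mul_apply, Fin.sum_univ_three, Matrix.vecHead, Matrix.vecTail] at this
      linear_combination this
    have q00 : X 0 0 = X 1 1 := by
      have := congrFun (congrFun h1 0) 1
      simp [Matrix.mul_apply, Fin.sum_univ_three, Matrix.vecHead, Matrix.vecTail] at this
      linear_combination this
    have hXeq : X = Matrix.diagonal ![X 0 0, X 0 0, X 2 2] := by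
      ext i j
      fin_cases i <;> fin_cases j <;>
        simp [Matrix.diagonal, q01, q02, q10, q20, q12, q21, q00]
    rw [hXeq] at hX
    simp [Matrix.det_diagonal, Fin.prod_univ_three, isUnit_iff_ne_zero] at hX
    obtain ⟨h00, h22⟩ := hX
    exact ⟨Units.mk0 _ h00, Units.mk0 _ h22, hXeq⟩
  · rintro ⟨x, y, rfl⟩ A ⟨a, b, c, d, -, rfl⟩
    refine ⟨1, one_pow 3, ?_⟩
    rw [one_smul]
    ext i j
    fin_cases i <;> fin_cases j <;>
      simp [Matrix.mul_apply, Fin.sum_univ_three, Matrix.diagonal, mul_comm]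
end

section
/- Let S = { [[a,b,0],[c,d,0],[0,0,1]] : ad−bc ≠ 0 } ⊂ GL₃(ℂ), and let ξ be a primitive cube root of unity. Let a ∈ ℂˣ with a² ≠ 1 and a³ ≠ 1, and B = diag(a, a⁻¹, 1) ∈ S. Then there is no X ∈ GL₃(ℂ) with X·B = ξ·B·X. -/
open Matrix

/-- For `a ∈ ℂˣ` with `a² ≠ 1`, `a³ ≠ 1`, a primitive cube root of unity
`ξ`, and `B = diag(a, a⁻¹, 1)`, there is no invertible `X` with `X·B = ξ·B·X`. -/
theorem stmt16 (a : ℂ) (ha : a ≠ 0) (ha2 : a ^ 2 ≠ 1) (ha3 : a ^ 3 ≠ 1)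
    (ξ : ℂ) (hξ : ξ ^ 3 = 1) (hξ1 : ξ ≠ 1)
    (B : Matrix (Fin 3) (Fin 3) ℂ) (hB : B = Matrix.diagonal ![a, a⁻¹, 1]) :
    ¬ ∃ X : Matrix (Fin 3) (Fin 3) ℂ, IsUnit X.det ∧ X * B = ξ • (B * X) := by
  rintro ⟨X, hX, h⟩
  have hXi : X * X⁻¹ = 1 := Matrix.mul_nonsing_inv X hX
  have htr : Matrix.trace B = ξ * Matrix.trace B := by
    calc Matrix.trace B = Matrix.trace ((X * B) * X⁻¹) := by
          rw [Matrix.trace_mul_comm, ← Matrix.mul_assoc, Matrix.nonsing_inv_mul X hX,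
            Matrix.one_mul]
      _ = Matrix.trace ((ξ • (B * X)) * X⁻¹) := by rw [h]
      _ = ξ * Matrix.trace B := by
          rw [Matrix.smul_mul, Matrix.trace_smul, Matrix.mul_assoc, hXi, Matrix.mul_one,
            smul_eq_mul]
  have htr0 : Matrix.trace B = 0 := by
    by_contra h0
    exact hξ1 ((mul_left_cancel₀ h0 (by rw [mul_one, mul_comm]; exact htr)).symm)
  have hval : a + a⁻¹ + 1 = 0 := by
    rw [hB] at htr0
    simpa [Matrix.trace, Matrix.diagonal, Fin.sum_univ_three] using htr0
  apply ha3
  have : a ^ 2 + a + 1 = 0 := by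
    have := congrArg (· * a) hval
    field_simp at this
    linear_combination this
  linear_combination (a - 1) * this
end
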